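/- Let U ⊆ ℝ⁵ be open and let (σ, θ₀, θ₁, θ₂, θ₃; W₀, W₁, W₂, H, G₀, G₁, G₂, G₃, I₀, T₁, T₆, T₇) be a canonical coframe on U with W₂ identically zero. Then the torsion identities G₃ = 0 and G₂ = W₁ hold at every point of U. -/

import Mathlib

open Topology Filter

noncomputable section

/-- The exterior derivative of a smooth 1-form `η`, as a scalar-valued 2-form:
`dη(x)(u,v) = (fderiv ℝ η x u)(v) − (fderiv ℝ η x v)(u)`. -/
def d1 {E : Type*} [NormedAddCommGroup E] [NormedSpace ℝ E]
    (η : E → (E →L[ℝ] ℝ)) (x u v : E) : ℝ :=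
  fderiv ℝ η x u v - fderiv ℝ η x v u

/-- The wedge product of two 1-forms, as a scalar-valued 2-form. -/
def wedge {E : Type*} [NormedAddCommGroup E] [NormedSpace ℝ E]
    (η ζ : E → (E →L[ℝ] ℝ)) (x u v : E) : ℝ :=
  η x u * ζ x v - η x v * ζ x u

section Helpers

variable {E : Type*} [NormedAddCommGroup E] [NormedSpace ℝ E] {x : E}

lemma fderiv_apply_const {F : Type*} [NormedAddCommGroup F] [NormedSpace ℝ F]
    {X : E → (E →L[ℝ] F)} (hX : DifferentiableAt ℝ X x) (a c : E) :
    fderiv ℝ (fun y => X y a) x c = fderiv ℝ X x c a := by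
  have h := fderiv_clm_apply (c := X) (u := fun _ : E => a) hX (differentiableAt_const a)
  rw [h]
  simp

lemma wedge_diffAt {η ζ : E → (E →L[ℝ] ℝ)} (hη : DifferentiableAt ℝ η x)
    (hζ : DifferentiableAt ℝ ζ x) (a b : E) :
    DifferentiableAt ℝ (fun y => wedge η ζ y a b) x := by
  simp only [wedge]
  exact ((hη.clm_apply (differentiableAt_const a)).mul
      (hζ.clm_apply (differentiableAt_const b))).sub
    ((hη.clm_apply (differentiableAt_const b)).mul
      (hζ.clm_apply (differentiableAt_const a)))

lemma fderiv_wedge {η ζ : E → (E →L[ℝ] ℝ)} (hη : DifferentiableAt ℝ η x)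
    (hζ : DifferentiableAt ℝ ζ x) (a b c : E) :
    fderiv ℝ (fun y => wedge η ζ y a b) x c =
      fderiv ℝ η x c a * ζ x b + η x a * fderiv ℝ ζ x c b
      - fderiv ℝ η x c b * ζ x a - η x b * fderiv ℝ ζ x c a := by
  have hηa : ∀ e : E, DifferentiableAt ℝ (fun y => η y e) x :=
    fun e => hη.clm_apply (differentiableAt_const e)
  have hζa : ∀ e : E, DifferentiableAt ℝ (fun y => ζ y e) x :=
    fun e => hζ.clm_apply (differentiableAt_const e)
  simp only [wedge]
  rw [fderiv_fun_sub ((hηa a).fun_mul (hζa b)) ((hηa b).fun_mul (hζa a)),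
    fderiv_fun_mul (hηa a) (hζa b), fderiv_fun_mul (hηa b) (hζa a)]
  simp only [ContinuousLinearMap.sub_apply, ContinuousLinearMap.add_apply,
    ContinuousLinearMap.smul_apply, smul_eq_mul,
    fderiv_apply_const hη, fderiv_apply_const hζ]
  ring

/-- The key consequence of the symmetry of second derivatives:
the cyclic sum of derivatives of `d1 η` vanishes. -/
lemma cyc_d1 {η : E → (E →L[ℝ] ℝ)} {U : Set E} (hU : IsOpen U)
    (hη : ContDiffOn ℝ (⊤ : ℕ∞) η U) (hx : x ∈ U) (u v w : E) :
    fderiv ℝ (fun y => d1 η y u v) x w + fderiv ℝ (fun y => d1 η y v w) x u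
      + fderiv ℝ (fun y => d1 η y w u) x v = 0 := by
  have hmem := hU.mem_nhds hx
  have hηx : ContDiffAt ℝ (⊤ : ℕ∞) η x := hη.contDiffAt hmem
  have hf'c : ContDiffAt ℝ (1 : ℕ∞) (fderiv ℝ η) x :=
    hηx.fderiv_right (by exact_mod_cast WithTop.coe_le_coe.mpr (le_top : (1+1:ℕ∞) ≤ ⊤))
  have hf' : DifferentiableAt ℝ (fderiv ℝ η) x :=
    hf'c.differentiableAt (by simp)
  have key : ∀ a b c : E, fderiv ℝ (fun y => d1 η y a b) x c =
      fderiv ℝ (fderiv ℝ η) x c a b - fderiv ℝ (fderiv ℝ η) x c b a := by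
    intro a b c
    have h1 : ∀ e : E, DifferentiableAt ℝ (fun y => fderiv ℝ η y e) x :=
      fun e => hf'.clm_apply (differentiableAt_const e)
    have h2 : ∀ a b : E, fderiv ℝ (fun y => fderiv ℝ η y a b) x c =
        fderiv ℝ (fderiv ℝ η) x c a b := by
      intro a b
      have e1 : fderiv ℝ (fun y => (fderiv ℝ η y a) b) x c
          = fderiv ℝ (fun y => fderiv ℝ η y a) x c b :=
        fderiv_apply_const (h1 a) b c
      have e2 : fderiv ℝ (fun y => fderiv ℝ η y a) x c = fderiv ℝ (fderiv ℝ η) x c a :=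
        fderiv_apply_const hf' a c
      rw [e1, e2]
    have hd : ∀ a b : E, DifferentiableAt ℝ (fun y => fderiv ℝ η y a b) x :=
      fun a b => (h1 a).clm_apply (differentiableAt_const b)
    have : fderiv ℝ (fun y => d1 η y a b) x
        = fderiv ℝ (fun y => fderiv ℝ η y a b) x - fderiv ℝ (fun y => fderiv ℝ η y b a) x := by
      simp only [d1]
      exact fderiv_sub (hd a b) (hd b a)
    rw [this, ContinuousLinearMap.sub_apply, h2, h2]
  have hsymm : ∀ a c : E, fderiv ℝ (fderiv ℝ η) x a c = fderiv ℝ (fderiv ℝ η) x c a := by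
    intro a c
    refine second_derivative_symmetric_of_eventually (f := η) (f' := fderiv ℝ η) ?_ hf'.hasFDerivAt a c
    filter_upwards [hmem] with y hy
    exact ((hη.contDiffAt (hU.mem_nhds hy)).differentiableAt
      (by simp)).hasFDerivAt
  rw [key u v w, key v w u, key w u v, hsymm w u, hsymm w v, hsymm u v]
  ring

/-- Exterior derivative of a combination `f • η + g • ζ`. -/
lemma d1_comb {f g : E → ℝ} {η ζ : E → (E →L[ℝ] ℝ)} (hf : DifferentiableAt ℝ f x)
    (hg : DifferentiableAt ℝ g x) (hη : DifferentiableAt ℝ η x)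
    (hζ : DifferentiableAt ℝ ζ x) (a b : E) :
    d1 (fun y => f y • η y + g y • ζ y) x a b =
      fderiv ℝ f x a * η x b - fderiv ℝ f x b * η x a + f x * d1 η x a b
      + fderiv ℝ g x a * ζ x b - fderiv ℝ g x b * ζ x a + g x * d1 ζ x a b := by
  have h : fderiv ℝ (fun y => f y • η y + g y • ζ y) x
      = (f x • fderiv ℝ η x + (fderiv ℝ f x).smulRight (η x))
        + (g x • fderiv ℝ ζ x + (fderiv ℝ g x).smulRight (ζ x)) := by
    rw [fderiv_fun_add (hf.fun_smul hη) (hg.fun_smul hζ), fderiv_fun_smul hf hη, fderiv_fun_smul hg hζ]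
  simp only [d1, h, ContinuousLinearMap.add_apply, ContinuousLinearMap.smul_apply,
    ContinuousLinearMap.smulRight_apply, smul_eq_mul]
  ring

/-- A linearly independent family of 5 continuous linear functionals on `ℝ⁵` can take
arbitrary prescribed values. -/
lemma exists_dual_vec (f : Fin 5 → ((Fin 5 → ℝ) →L[ℝ] ℝ))
    (hf : LinearIndependent ℝ f) (c : Fin 5 → ℝ) :
    ∃ y : Fin 5 → ℝ, ∀ i, f i y = c i := by
  classical
  have h1 : Module.finrank ℝ ((Fin 5 → ℝ) →ₗ[ℝ] ℝ) = 5 := by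
    have h2 : Module.finrank ℝ (Module.Dual ℝ (Fin 5 → ℝ)) = Module.finrank ℝ (Fin 5 → ℝ) :=
      Subspace.dual_finrank_eq
    exact h2.trans (by simp)
  have hfr : Module.finrank ℝ ((Fin 5 → ℝ) →L[ℝ] ℝ) = 5 :=
    ((LinearMap.toContinuousLinearMap :
        ((Fin 5 → ℝ) →ₗ[ℝ] ℝ) ≃ₗ[ℝ] ((Fin 5 → ℝ) →L[ℝ] ℝ)).symm.finrank_eq).trans h1
  have hcard : Fintype.card (Fin 5) = Module.finrank ℝ ((Fin 5 → ℝ) →L[ℝ] ℝ) := by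
    simp [hfr]
  let B : Module.Basis (Fin 5) ℝ ((Fin 5 → ℝ) →L[ℝ] ℝ) :=
    basisOfLinearIndependentOfCardEqFinrank hf hcard
  have hB : ⇑B = f := coe_basisOfLinearIndependentOfCardEqFinrank hf hcard
  let ev : (Fin 5 → ℝ) →ₗ[ℝ] (((Fin 5 → ℝ) →L[ℝ] ℝ) →ₗ[ℝ] ℝ) :=
    { toFun := fun y =>
        { toFun := fun T => T y
          map_add' := by intro T S; simp
          map_smul' := by intro r T; simp }
      map_add' := by intro y z; ext T; simp
      map_smul' := by intro r y; ext T; simp }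
  have hinj : Function.Injective ev := by
    rw [injective_iff_map_eq_zero]
    intro y hy
    funext i
    have h0 := congrArg (fun φ => φ (ContinuousLinearMap.proj (R := ℝ) (φ := fun _ : Fin 5 => ℝ) i)) hy
    simpa [ev] using h0
  have hsurj : Function.Surjective ev := by
    haveI : FiniteDimensional ℝ ((Fin 5 → ℝ) →L[ℝ] ℝ) :=
      Module.finite_of_finrank_pos (by rw [hfr]; norm_num)
    have h3 : Module.finrank ℝ (Module.Dual ℝ ((Fin 5 → ℝ) →L[ℝ] ℝ))
        = Module.finrank ℝ ((Fin 5 → ℝ) →L[ℝ] ℝ) := Subspace.dual_finrank_eq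
    have hfre : Module.finrank ℝ (Fin 5 → ℝ)
        = Module.finrank ℝ (((Fin 5 → ℝ) →L[ℝ] ℝ) →ₗ[ℝ] ℝ) :=
      ((by simp : Module.finrank ℝ (Fin 5 → ℝ) = 5)).trans (h3.trans hfr).symm
    exact (LinearMap.injective_iff_surjective_of_finrank_eq_finrank hfre).mp hinj
  obtain ⟨y, hy⟩ := hsurj (∑ i, c i • B.coord i)
  refine ⟨y, fun i => ?_⟩
  have h1 : ev y (f i) = c i := by
    rw [hy]
    rw [← hB]
    simp only [LinearMap.coe_sum, Finset.sum_apply, LinearMap.smul_apply,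
      Module.Basis.coord_apply, Module.Basis.repr_self, smul_eq_mul]
    rw [Finset.sum_eq_single i]
    · simp
    · intro j _ hj
      simp [Finsupp.single_apply, hj.symm]
    · intro h; exact absurd (Finset.mem_univ i) h
  simpa [ev] using h1

end Helpers

set_option maxHeartbeats 2000000 in
/-- For a canonical coframe with `W₂ ≡ 0`, the torsion identities `G₃ = 0` and
`G₂ = W₁` hold (they result from `d(dθ₁) = 0`). -/
theorem torsion_identities_G3_and_G2
    (U : Set (Fin 5 → ℝ)) (hU : IsOpen U)
    (σ θ0 θ1 θ2 θ3 α β γ : (Fin 5 → ℝ) → ((Fin 5 → ℝ) →L[ℝ] ℝ))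
    (W0 W1 W2 H G0 G1 G2 G3 I0 T1 T6 T7 : (Fin 5 → ℝ) → ℝ)
    (hσ : ContDiffOn ℝ (⊤ : ℕ∞) σ U) (hθ0 : ContDiffOn ℝ (⊤ : ℕ∞) θ0 U)
    (hθ1 : ContDiffOn ℝ (⊤ : ℕ∞) θ1 U) (hθ2 : ContDiffOn ℝ (⊤ : ℕ∞) θ2 U)
    (hθ3 : ContDiffOn ℝ (⊤ : ℕ∞) θ3 U)
    (hW0 : ContDiffOn ℝ (⊤ : ℕ∞) W0 U) (hW1 : ContDiffOn ℝ (⊤ : ℕ∞) W1 U)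
    (hW2 : ContDiffOn ℝ (⊤ : ℕ∞) W2 U) (hH : ContDiffOn ℝ (⊤ : ℕ∞) H U)
    (hG0 : ContDiffOn ℝ (⊤ : ℕ∞) G0 U) (hG1 : ContDiffOn ℝ (⊤ : ℕ∞) G1 U)
    (hG2 : ContDiffOn ℝ (⊤ : ℕ∞) G2 U) (hG3 : ContDiffOn ℝ (⊤ : ℕ∞) G3 U)
    (hI0 : ContDiffOn ℝ (⊤ : ℕ∞) I0 U) (hT1 : ContDiffOn ℝ (⊤ : ℕ∞) T1 U)
    (hT6 : ContDiffOn ℝ (⊤ : ℕ∞) T6 U) (hT7 : ContDiffOn ℝ (⊤ : ℕ∞) T7 U)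
    (hcoframe : ∀ x ∈ U, LinearIndependent ℝ ![σ x, θ0 x, θ1 x, θ2 x, θ3 x])
    (hα : ∀ x ∈ U, α x = (-2 : ℝ) • (W0 x • θ0 x + W1 x • θ1 x + W2 x • θ2 x))
    (hβ : ∀ x ∈ U, β x = (2 : ℝ) • α x + (W0 x • θ0 x + W1 x • θ1 x + W2 x • θ2 x))
    (hγ : ∀ x ∈ U, γ x =
      H x • σ x - (3 : ℝ) • (G0 x • θ0 x + G1 x • θ1 x + G2 x • θ2 x + G3 x • θ3 x))
    (hdσ : ∀ x ∈ U, ∀ u v, d1 σ x u v =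
      wedge α σ x u v
      + wedge θ0 (fun y => T1 y • θ1 y + (3 / 5 : ℝ) • θ3 y) x u v
      - wedge θ1 θ2 x u v)
    (hdθ0 : ∀ x ∈ U, ∀ u v, d1 θ0 x u v =
      wedge (fun y => (2 : ℝ) • α y) θ0 x u v + wedge σ θ1 x u v)
    (hdθ1 : ∀ x ∈ U, ∀ u v, d1 θ1 x u v =
      wedge (fun y => β y - α y) θ1 x u v + wedge γ θ0 x u v + wedge σ θ2 x u v)
    (hdθ2 : ∀ x ∈ U, ∀ u v, d1 θ2 x u v =
      wedge (fun y => β y - (2 : ℝ) • α y) θ2 x u v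
      + (4 / 3) * wedge γ θ1 x u v + wedge σ θ3 x u v)
    (hdθ3 : ∀ x ∈ U, ∀ u v, d1 θ3 x u v =
      wedge (fun y => β y - (3 : ℝ) • α y) θ3 x u v + wedge γ θ2 x u v
      + I0 x * wedge σ θ0 x u v + T6 x * wedge θ0 θ1 x u v + T7 x * wedge θ0 θ2 x u v)
    (hW2zero : ∀ x ∈ U, W2 x = 0) :
    ∀ x ∈ U, G3 x = 0 ∧ G2 x = W1 x := by
  intro x hx
  have hmem := hU.mem_nhds hx
  -- abbreviations
  set P : (Fin 5 → ℝ) → ((Fin 5 → ℝ) →L[ℝ] ℝ) :=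
    fun y => (-(W0 y)) • θ0 y + (-(W1 y)) • θ1 y with hPdef
  set Q : (Fin 5 → ℝ) → ((Fin 5 → ℝ) →L[ℝ] ℝ) :=
    fun y => H y • σ y
      - (3 : ℝ) • (G0 y • θ0 y + G1 y • θ1 y + G2 y • θ2 y + G3 y • θ3 y) with hQdef
  -- differentiability at x
  have dAt : ∀ {f : (Fin 5 → ℝ) → ℝ}, ContDiffOn ℝ (⊤ : ℕ∞) f U → DifferentiableAt ℝ f x :=
    fun hf => (hf.contDiffAt hmem).differentiableAt (by simp)
  have dAt' : ∀ {f : (Fin 5 → ℝ) → ((Fin 5 → ℝ) →L[ℝ] ℝ)},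
      ContDiffOn ℝ (⊤ : ℕ∞) f U → DifferentiableAt ℝ f x :=
    fun hf => (hf.contDiffAt hmem).differentiableAt (by simp)
  have dσx := dAt' hσ
  have dθ0x := dAt' hθ0
  have dθ1x := dAt' hθ1
  have dθ2x := dAt' hθ2
  have dθ3x := dAt' hθ3
  have dW0x := dAt hW0
  have dW1x := dAt hW1
  have dHx := dAt hH
  have dG0x := dAt hG0
  have dG1x := dAt hG1
  have dG2x := dAt hG2
  have dG3x := dAt hG3
  have dPx : DifferentiableAt ℝ P x := by
    rw [hPdef]
    exact (dW0x.neg.smul dθ0x).add (dW1x.neg.smul dθ1x)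
  have dQx : DifferentiableAt ℝ Q x := by
    rw [hQdef]
    exact (dHx.smul dσx).sub
      (((((dG0x.smul dθ0x).add (dG1x.smul dθ1x)).add
        (dG2x.smul dθ2x)).add (dG3x.smul dθ3x)).const_smul (3:ℝ))
  -- the master identity from d(dθ₁) = 0
  have master : ∀ u v w : Fin 5 → ℝ,
      d1 P x w u * θ1 x v + d1 P x u v * θ1 x w + d1 P x v w * θ1 x u
      + P x u * d1 θ1 x w v + P x v * d1 θ1 x u w + P x w * d1 θ1 x v u
      + d1 Q x w u * θ0 x v + d1 Q x u v * θ0 x w + d1 Q x v w * θ0 x u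
      + Q x u * d1 θ0 x w v + Q x v * d1 θ0 x u w + Q x w * d1 θ0 x v u
      + d1 σ x w u * θ2 x v + d1 σ x u v * θ2 x w + d1 σ x v w * θ2 x u
      + σ x u * d1 θ2 x w v + σ x v * d1 θ2 x u w + σ x w * d1 θ2 x v u = 0 := by
    intro u v w
    have hFG : ∀ a b : Fin 5 → ℝ, (fun y => d1 θ1 y a b) =ᶠ[𝓝 x]
        (fun y => wedge P θ1 y a b + wedge Q θ0 y a b + wedge σ θ2 y a b) := by
      intro a b
      filter_upwards [hmem] with y hy
      have hPy : β y - α y = P y := by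
        simp only [hPdef]
        rw [hβ y hy, hα y hy, hW2zero y hy]
        module
      have hQy : γ y = Q y := by
        simp only [hQdef]
        exact hγ y hy
      rw [hdθ1 y hy a b]
      simp only [wedge]
      rw [hPy, hQy]
    have hG : ∀ a b c : Fin 5 → ℝ,
        fderiv ℝ (fun y => wedge P θ1 y a b + wedge Q θ0 y a b + wedge σ θ2 y a b) x c =
          (fderiv ℝ P x c a * θ1 x b + P x a * fderiv ℝ θ1 x c b
            - fderiv ℝ P x c b * θ1 x a - P x b * fderiv ℝ θ1 x c a)
          + (fderiv ℝ Q x c a * θ0 x b + Q x a * fderiv ℝ θ0 x c b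
            - fderiv ℝ Q x c b * θ0 x a - Q x b * fderiv ℝ θ0 x c a)
          + (fderiv ℝ σ x c a * θ2 x b + σ x a * fderiv ℝ θ2 x c b
            - fderiv ℝ σ x c b * θ2 x a - σ x b * fderiv ℝ θ2 x c a) := by
      intro a b c
      have w1 := wedge_diffAt dPx dθ1x a b
      have w2 := wedge_diffAt dQx dθ0x a b
      have w3 := wedge_diffAt dσx dθ2x a b
      rw [fderiv_fun_add (w1.fun_add w2) w3, fderiv_fun_add w1 w2,
        ContinuousLinearMap.add_apply, ContinuousLinearMap.add_apply,
        fderiv_wedge dPx dθ1x a b c, fderiv_wedge dQx dθ0x a b c,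
        fderiv_wedge dσx dθ2x a b c]
    have hc := cyc_d1 hU hθ1 hx u v w
    rw [(hFG u v).fderiv_eq, (hFG v w).fderiv_eq, (hFG w u).fderiv_eq] at hc
    rw [hG u v w, hG v w u, hG w u v] at hc
    simp only [d1]
    linear_combination hc
  -- dual vectors
  obtain ⟨u, hu⟩ := exists_dual_vec _ (hcoframe x hx) ![1, 0, 0, 0, 0]
  obtain ⟨v, hv⟩ := exists_dual_vec _ (hcoframe x hx) ![0, 0, 1, 0, 0]
  obtain ⟨w3, hw3⟩ := exists_dual_vec _ (hcoframe x hx) ![0, 0, 0, 0, 1]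
  obtain ⟨w2, hw2⟩ := exists_dual_vec _ (hcoframe x hx) ![0, 0, 0, 1, 0]
  -- values of the coframe on dual vectors
  have hσu : σ x u = 1 := by simpa using hu 0
  have hθ0u : θ0 x u = 0 := by simpa using hu 1
  have hθ1u : θ1 x u = 0 := by simpa using hu 2
  have hθ2u : θ2 x u = 0 := by simpa using hu 3
  have hθ3u : θ3 x u = 0 := by simpa using hu 4
  have hσv : σ x v = 0 := by simpa using hv 0
  have hθ0v : θ0 x v = 0 := by simpa using hv 1
  have hθ1v : θ1 x v = 1 := by simpa using hv 2
  have hθ2v : θ2 x v = 0 := by simpa using hv 3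
  have hθ3v : θ3 x v = 0 := by simpa using hv 4
  have hσw3 : σ x w3 = 0 := by simpa using hw3 0
  have hθ0w3 : θ0 x w3 = 0 := by simpa using hw3 1
  have hθ1w3 : θ1 x w3 = 0 := by simpa using hw3 2
  have hθ2w3 : θ2 x w3 = 0 := by simpa using hw3 3
  have hθ3w3 : θ3 x w3 = 1 := by simpa using hw3 4
  have hσw2 : σ x w2 = 0 := by simpa using hw2 0
  have hθ0w2 : θ0 x w2 = 0 := by simpa using hw2 1
  have hθ1w2 : θ1 x w2 = 0 := by simpa using hw2 2
  have hθ2w2 : θ2 x w2 = 1 := by simpa using hw2 3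
  have hθ3w2 : θ3 x w2 = 0 := by simpa using hw2 4
  have hW2x : W2 x = 0 := hW2zero x hx
  -- values of the connection forms
  have hαval : ∀ a, α x a = -2 * (W0 x * θ0 x a + W1 x * θ1 x a + W2 x * θ2 x a) := by
    intro a
    rw [hα x hx]
    simp only [ContinuousLinearMap.smul_apply, ContinuousLinearMap.add_apply, smul_eq_mul]
  have hβval : ∀ a, β x a = 2 * α x a + (W0 x * θ0 x a + W1 x * θ1 x a + W2 x * θ2 x a) := by
    intro a
    rw [hβ x hx]
    simp only [ContinuousLinearMap.smul_apply, ContinuousLinearMap.add_apply, smul_eq_mul]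
  have hγval : ∀ a, γ x a = H x * σ x a
      - 3 * (G0 x * θ0 x a + G1 x * θ1 x a + G2 x * θ2 x a + G3 x * θ3 x a) := by
    intro a
    rw [hγ x hx]
    simp only [ContinuousLinearMap.smul_apply, ContinuousLinearMap.add_apply,
      ContinuousLinearMap.sub_apply, smul_eq_mul]
  have hPval : ∀ a, P x a = -(W0 x) * θ0 x a + -(W1 x) * θ1 x a := by
    intro a
    simp only [hPdef, ContinuousLinearMap.smul_apply, ContinuousLinearMap.add_apply, smul_eq_mul]
  have hQval : ∀ a, Q x a = H x * σ x a
      - 3 * (G0 x * θ0 x a + G1 x * θ1 x a + G2 x * θ2 x a + G3 x * θ3 x a) := by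
    intro a
    simp only [hQdef, ContinuousLinearMap.smul_apply, ContinuousLinearMap.add_apply,
      ContinuousLinearMap.sub_apply, smul_eq_mul]
  -- specific values
  have hαu : α x u = 0 := by rw [hαval u, hθ0u, hθ1u, hθ2u]; ring
  have hαv : α x v = -2 * W1 x := by rw [hαval v, hθ0v, hθ1v, hθ2v]; ring
  have hαw3 : α x w3 = 0 := by rw [hαval w3, hθ0w3, hθ1w3, hθ2w3]; ring
  have hαw2 : α x w2 = -2 * (W2 x) := by rw [hαval w2, hθ0w2, hθ1w2, hθ2w2]; ring
  have hαw2' : α x w2 = 0 := by rw [hαw2, hW2x]; ring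
  have hβu : β x u = 0 := by rw [hβval u, hαu, hθ0u, hθ1u, hθ2u]; ring
  have hβv : β x v = -3 * W1 x := by rw [hβval v, hαv, hθ0v, hθ1v, hθ2v]; ring
  have hβw3 : β x w3 = 0 := by rw [hβval w3, hαw3, hθ0w3, hθ1w3, hθ2w3]; ring
  have hβw2 : β x w2 = W2 x := by rw [hβval w2, hαw2', hθ0w2, hθ1w2, hθ2w2]; ring
  have hβw2' : β x w2 = 0 := by rw [hβw2, hW2x]
  have hγu : γ x u = H x := by rw [hγval u, hσu, hθ0u, hθ1u, hθ2u, hθ3u]; ring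
  have hγv : γ x v = -3 * G1 x := by rw [hγval v, hσv, hθ0v, hθ1v, hθ2v, hθ3v]; ring
  have hγw3 : γ x w3 = -3 * G3 x := by rw [hγval w3, hσw3, hθ0w3, hθ1w3, hθ2w3, hθ3w3]; ring
  have hγw2 : γ x w2 = -3 * G2 x := by rw [hγval w2, hσw2, hθ0w2, hθ1w2, hθ2w2, hθ3w2]; ring
  have hPu : P x u = 0 := by rw [hPval u, hθ0u, hθ1u]; ring
  have hPv : P x v = -(W1 x) := by rw [hPval v, hθ0v, hθ1v]; ring
  have hPw3 : P x w3 = 0 := by rw [hPval w3, hθ0w3, hθ1w3]; ring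
  have hPw2 : P x w2 = 0 := by rw [hPval w2, hθ0w2, hθ1w2]; ring
  have hQu : Q x u = H x := by rw [hQval u, hσu, hθ0u, hθ1u, hθ2u, hθ3u]; ring
  have hQv : Q x v = -3 * G1 x := by rw [hQval v, hσv, hθ0v, hθ1v, hθ2v, hθ3v]; ring
  have hQw3 : Q x w3 = -3 * G3 x := by rw [hQval w3, hσw3, hθ0w3, hθ1w3, hθ2w3, hθ3w3]; ring
  have hQw2 : Q x w2 = -3 * G2 x := by rw [hQval w2, hσw2, hθ0w2, hθ1w2, hθ2w2, hθ3w2]; ring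
  -- d1 values on pairs of dual vectors, from the structure equations
  have hd1θ0 : ∀ a b, d1 θ0 x a b = 2 * α x a * θ0 x b - 2 * α x b * θ0 x a
      + σ x a * θ1 x b - σ x b * θ1 x a := by
    intro a b
    rw [hdθ0 x hx a b]
    simp only [wedge, ContinuousLinearMap.smul_apply, smul_eq_mul]
    ring
  have hd1θ1 : ∀ a b, d1 θ1 x a b = (β x a - α x a) * θ1 x b - (β x b - α x b) * θ1 x a
      + γ x a * θ0 x b - γ x b * θ0 x a + σ x a * θ2 x b - σ x b * θ2 x a := by
    intro a b
    rw [hdθ1 x hx a b]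
    simp only [wedge, ContinuousLinearMap.sub_apply]
    ring
  have hd1θ2 : ∀ a b, d1 θ2 x a b =
      (β x a - 2 * α x a) * θ2 x b - (β x b - 2 * α x b) * θ2 x a
      + (4 / 3) * (γ x a * θ1 x b - γ x b * θ1 x a)
      + σ x a * θ3 x b - σ x b * θ3 x a := by
    intro a b
    rw [hdθ2 x hx a b]
    simp only [wedge, ContinuousLinearMap.sub_apply, ContinuousLinearMap.smul_apply, smul_eq_mul]
    ring
  have hd1σ : ∀ a b, d1 σ x a b = α x a * σ x b - α x b * σ x a
      + θ0 x a * (T1 x * θ1 x b + (3 / 5) * θ3 x b)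
      - θ0 x b * (T1 x * θ1 x a + (3 / 5) * θ3 x a)
      - (θ1 x a * θ2 x b - θ1 x b * θ2 x a) := by
    intro a b
    rw [hdσ x hx a b]
    simp only [wedge, ContinuousLinearMap.add_apply, ContinuousLinearMap.smul_apply, smul_eq_mul]
    ring
  have hd1P : ∀ a b, d1 P x a b =
      fderiv ℝ (fun y => -(W0 y)) x a * θ0 x b - fderiv ℝ (fun y => -(W0 y)) x b * θ0 x a
      + (-(W0 x)) * d1 θ0 x a b
      + fderiv ℝ (fun y => -(W1 y)) x a * θ1 x b - fderiv ℝ (fun y => -(W1 y)) x b * θ1 x a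
      + (-(W1 x)) * d1 θ1 x a b := by
    intro a b
    rw [hPdef]
    exact d1_comb dW0x.neg dW1x.neg dθ0x dθ1x a b
  ------------------------------------------------------------------
  constructor
  · -- G3 = 0, using the triple (u, v, w3) dual to (σ, θ1, θ3)
    have m := master u v w3
    have e00 : d1 θ0 x w3 u = 0 := by
      rw [hd1θ0 w3 u, hθ0u, hθ0w3, hσu, hσw3, hθ1u, hθ1w3]; ring
    have e01 : d1 θ1 x w3 u = 0 := by
      rw [hd1θ1 w3 u, hθ1u, hθ1w3, hθ0u, hθ0w3, hσu, hσw3, hθ2u, hθ2w3]; ring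
    have eP : d1 P x w3 u = 0 := by
      rw [hd1P w3 u, hθ0u, hθ0w3, hθ1u, hθ1w3, e00, e01]; ring
    have e1 : d1 θ0 x w3 v = 0 := by
      rw [hd1θ0 w3 v, hθ0v, hθ0w3, hσv, hσw3, hθ1v, hθ1w3]; ring
    have e2 : d1 θ0 x u w3 = 0 := by
      rw [hd1θ0 u w3, hθ0u, hθ0w3, hσu, hσw3, hθ1u, hθ1w3]; ring
    have e3 : d1 θ0 x v u = -1 := by
      rw [hd1θ0 v u, hθ0u, hθ0v, hσu, hσv, hθ1u, hθ1v]; ring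
    have e4 : d1 θ1 x w3 v = 0 := by
      rw [hd1θ1 w3 v, hβw3, hβv, hαw3, hαv, hθ1v, hθ1w3, hγv, hγw3, hθ0v, hθ0w3,
        hσv, hσw3, hθ2v, hθ2w3]; ring
    have e5 : d1 θ1 x u w3 = 0 := by
      rw [hd1θ1 u w3, hβu, hβw3, hαu, hαw3, hθ1u, hθ1w3, hγu, hγw3, hθ0u, hθ0w3,
        hσu, hσw3, hθ2u, hθ2w3]; ring
    have e6 : d1 θ1 x v u = 0 := by
      rw [hd1θ1 v u, hβv, hβu, hαv, hαu, hθ1v, hθ1u, hγv, hγu, hθ0v, hθ0u,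
        hσv, hσu, hθ2v, hθ2u]; ring
    have e7 : d1 θ2 x w3 v = -4 * G3 x := by
      rw [hd1θ2 w3 v, hβw3, hβv, hαw3, hαv, hθ2v, hθ2w3, hγv, hγw3, hθ1v, hθ1w3,
        hσv, hσw3, hθ3v, hθ3w3]; ring
    rw [eP, e1, e2, e3, e4, e5, e6, e7, hPu, hPv, hPw3, hQu, hQv, hQw3,
      hσu, hσv, hσw3, hθ0u, hθ0v, hθ0w3, hθ1u, hθ1v, hθ1w3, hθ2u, hθ2v, hθ2w3] at m
    linarith [m]
  · -- G2 = W1, using the triple (u, v, w2) dual to (σ, θ1, θ2)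
    have m := master u v w2
    have e00 : d1 θ0 x w2 u = 0 := by
      rw [hd1θ0 w2 u, hθ0u, hθ0w2, hσu, hσw2, hθ1u, hθ1w2]; ring
    have e01 : d1 θ1 x w2 u = -1 := by
      rw [hd1θ1 w2 u, hβw2', hβu, hαw2', hαu, hθ1u, hθ1w2, hγu, hγw2, hθ0u, hθ0w2,
        hσu, hσw2, hθ2u, hθ2w2]; ring
    have eP : d1 P x w2 u = W1 x := by
      rw [hd1P w2 u, hθ0u, hθ0w2, hθ1u, hθ1w2, e00, e01]; ring
    have e1 : d1 θ0 x w2 v = 0 := by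
      rw [hd1θ0 w2 v, hθ0v, hθ0w2, hσv, hσw2, hθ1v, hθ1w2]; ring
    have e2 : d1 θ0 x u w2 = 0 := by
      rw [hd1θ0 u w2, hθ0u, hθ0w2, hσu, hσw2, hθ1u, hθ1w2]; ring
    have e3 : d1 θ0 x v u = -1 := by
      rw [hd1θ0 v u, hθ0u, hθ0v, hσu, hσv, hθ1u, hθ1v]; ring
    have e4 : d1 θ1 x w2 v = 0 := by
      rw [hd1θ1 w2 v, hβw2', hβv, hαw2', hαv, hθ1v, hθ1w2, hγv, hγw2, hθ0v, hθ0w2,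
        hσv, hσw2, hθ2v, hθ2w2]; ring
    have e5 : d1 θ1 x u w2 = 1 := by
      rw [hd1θ1 u w2, hβu, hβw2', hαu, hαw2', hθ1u, hθ1w2, hγu, hγw2, hθ0u, hθ0w2,
        hσu, hσw2, hθ2u, hθ2w2]; ring
    have e6 : d1 θ1 x v u = 0 := by
      rw [hd1θ1 v u, hβv, hβu, hαv, hαu, hθ1v, hθ1u, hγv, hγu, hθ0v, hθ0u,
        hσv, hσu, hθ2v, hθ2u]; ring
    have e7 : d1 θ2 x w2 v = -(W1 x) - 4 * G2 x := by
      rw [hd1θ2 w2 v, hβw2', hβv, hαw2', hαv, hθ2v, hθ2w2, hγv, hγw2, hθ1v, hθ1w2,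
        hσv, hσw2, hθ3v, hθ3w2]; ring
    have e8 : d1 σ x u v = 2 * W1 x := by
      rw [hd1σ u v, hαu, hαv, hσu, hσv, hθ0u, hθ0v, hθ1u, hθ1v, hθ2u, hθ2v]; ring
    rw [eP, e1, e2, e3, e4, e5, e6, e7, e8, hPu, hPv, hPw2, hQu, hQv, hQw2,
      hσu, hσv, hσw2, hθ0u, hθ0v, hθ0w2, hθ1u, hθ1v, hθ1w2, hθ2u, hθ2v, hθ2w2] at m
    linarith [m]
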